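/- With W(x) = 3^{3/2}((1 + x₅)² + x₁² + x₂² + x₃² + x₄²)^{−3/2} on the closed upper half-space of ℝ⁵, one has lim_{R→∞} (log R)^{−1} ∫_{B⁵₊(0,R)} x₅ W(x)² dx = 27π²/2, i.e. the weighted L² mass of the bubble on the half-ball of radius R diverges logarithmically with this precise rate. -/

import Mathlib

/-!
Write `x = (ȳ, t)` with `t = x₅`, `ȳ ∈ ℝ⁴`, so that `x₅ W² = 27 t / ((1 + t)² + |ȳ|²)³`; the
half-ball of radius `R` lies between the cylinders `(0, R/2] × B⁴(R/2)` and `(0, R] × B⁴(R)`.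
On a cylinder `(0, B] × B⁴(A)`, polar coordinates turn the `ȳ`-integral into
`2π² ∫₀ᴬ r³ / ((1 + t)² + r²)³ dr`, and this radial integral lies between
`1 / (4(1 + t)²) - 1 / (2A²)` and `1 / (4(1 + t)²)`. Integrating in `t` gives
`(27π²/2) ∫₀ᴮ t / (1 + t)² dt + O(B² / A²) = (27π²/2) log B + O(1)` for the cylinder integral.
-/

open MeasureTheory Real Set Filter Topology

noncomputable section

/-- The standard bubble `W_{1,0}` for `n = 4`, `γ = 1/2`:
`W(x) = 3^{3/2}((1 + x₅)² + x₁² + x₂² + x₃² + x₄²)^{-3/2}`. -/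
def Wb5 (x : Fin 5 → ℝ) : ℝ :=
  (3 : ℝ) ^ ((3 : ℝ) / 2) *
    ((1 + x 4) ^ 2 + (x 0) ^ 2 + (x 1) ^ 2 + (x 2) ^ 2 + (x 3) ^ 2) ^ (-(3 : ℝ) / 2)

/-- The upper half-ball `B⁵₊(0,R)`. -/
def hBall5 (R : ℝ) : Set (Fin 5 → ℝ) := {x | (∑ i, (x i) ^ 2) < R ^ 2 ∧ 0 < x 4}

open Metric

local notation "ℝ⁴" => EuclideanSpace ℝ (Fin 4)

theorem setIntegral_ball_fun_norm_addHaar {E F : Type*} [NormedAddCommGroup E] [NormedSpace ℝ E]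
    [Nontrivial E] [FiniteDimensional ℝ E] [MeasurableSpace E] [BorelSpace E] (μ : Measure E)
    [μ.IsAddHaarMeasure] [NormedAddCommGroup F] [NormedSpace ℝ F] (f : ℝ → F) (r : ℝ) :
    ∫ x in ball (0 : E) r, f ‖x‖ ∂μ = Module.finrank ℝ E • μ.real (ball 0 1) •
      ∫ y in Ioo 0 r, y ^ (Module.finrank ℝ E - 1) • f y := by
  have hind : (ball (0 : E) r).indicator (fun x => f ‖x‖) = fun x => (Iio r).indicator f ‖x‖ := by
    ext x
    simp [indicator]
  rw [← integral_indicator measurableSet_ball, hind, integral_fun_norm_addHaar μ,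
    ← Ioi_inter_Iio, ← setIntegral_indicator measurableSet_Iio]
  simp_rw [indicator_smul_apply]

theorem volume_real_ball_euclideanSpace_fin_four :
    volume.real (ball (0 : ℝ⁴) 1) = π ^ 2 / 2 := by
  rw [measureReal_def, InnerProductSpace.volume_ball_of_dim_even (k := 2) (by simp)]
  simp [ENNReal.toReal_ofReal (by positivity : (0 : ℝ) ≤ π ^ 2 / 2)]

theorem integral_ball_inv_sq_add_norm_sq_pow_three (a A : ℝ) :
    ∫ y in ball (0 : ℝ⁴) A, ((a ^ 2 + ‖y‖ ^ 2) ^ 3)⁻¹ =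
      2 * π ^ 2 * ∫ r in Ioo 0 A, r ^ 3 / (a ^ 2 + r ^ 2) ^ 3 := by
  rw [setIntegral_ball_fun_norm_addHaar volume (fun r => ((a ^ 2 + r ^ 2) ^ 3)⁻¹),
    volume_real_ball_euclideanSpace_fin_four, finrank_euclideanSpace_fin]
  simp only [nsmul_eq_mul, smul_eq_mul, div_eq_mul_inv, Nat.cast_ofNat, Nat.reduceSub]
  ring

theorem integral_pow_three_div_sq_add_sq_pow_three {a : ℝ} (ha : a ≠ 0) {A : ℝ} (hA : 0 ≤ A) :
    ∫ r in Ioo 0 A, r ^ 3 / (a ^ 2 + r ^ 2) ^ 3 =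
      (4 * a ^ 2)⁻¹ - (2 * (a ^ 2 + A ^ 2))⁻¹ + a ^ 2 * (4 * (a ^ 2 + A ^ 2) ^ 2)⁻¹ := by
  have hpos : ∀ r : ℝ, 0 < a ^ 2 + r ^ 2 := fun r => by positivity
  have hderiv : ∀ r ∈ uIcc 0 A, HasDerivAt
      (fun r => -(2 * (a ^ 2 + r ^ 2))⁻¹ + a ^ 2 * (4 * (a ^ 2 + r ^ 2) ^ 2)⁻¹)
      (r ^ 3 / (a ^ 2 + r ^ 2) ^ 3) r := by
    intro r _
    have hsq : HasDerivAt (fun r : ℝ => a ^ 2 + r ^ 2) (2 * r) r := by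
      simpa using (hasDerivAt_pow 2 r).const_add (a ^ 2)
    have hsq2 : HasDerivAt (fun r : ℝ => (a ^ 2 + r ^ 2) ^ 2)
        (2 * (a ^ 2 + r ^ 2) * (2 * r)) r := by
      simpa using hsq.fun_pow 2
    have h1 := ((hsq.const_mul 2).inv (by positivity)).neg
    have h2 := ((hsq2.const_mul 4).inv (by positivity)).const_mul (a ^ 2)
    refine (h1.add h2).congr_deriv ?_
    field_simp [(hpos r).ne']
    ring
  have hcont : Continuous fun r : ℝ => r ^ 3 / (a ^ 2 + r ^ 2) ^ 3 :=
    (continuous_pow 3).div (by fun_prop) fun r => (pow_pos (hpos r) 3).ne'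
  rw [← integral_Ioc_eq_integral_Ioo, ← intervalIntegral.integral_of_le hA,
    intervalIntegral.integral_eq_sub_of_hasDerivAt hderiv (hcont.intervalIntegrable 0 A)]
  field_simp [(hpos 0).ne', (hpos A).ne']
  ring

theorem integral_pow_three_div_sq_add_sq_pow_three_le {a : ℝ} (ha : a ≠ 0) {A : ℝ} (hA : 0 ≤ A) :
    ∫ r in Ioo 0 A, r ^ 3 / (a ^ 2 + r ^ 2) ^ 3 ≤ (4 * a ^ 2)⁻¹ := by
  have hu : a ^ 2 ≤ a ^ 2 + A ^ 2 := by nlinarith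
  have hs : 0 < a ^ 2 := by positivity
  have hlast : a ^ 2 * (4 * (a ^ 2 + A ^ 2) ^ 2)⁻¹ ≤ (2 * (a ^ 2 + A ^ 2))⁻¹ := by
    rw [← div_eq_mul_inv, ← one_div, div_le_div_iff₀ (by positivity) (by positivity)]
    nlinarith
  rw [integral_pow_three_div_sq_add_sq_pow_three ha hA]
  linarith

theorem le_integral_pow_three_div_sq_add_sq_pow_three {a : ℝ} (ha : a ≠ 0) {A : ℝ} (hA : 0 < A) :
    (4 * a ^ 2)⁻¹ - (2 * A ^ 2)⁻¹ ≤ ∫ r in Ioo 0 A, r ^ 3 / (a ^ 2 + r ^ 2) ^ 3 := by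
  have hmid : (2 * (a ^ 2 + A ^ 2))⁻¹ ≤ (2 * A ^ 2)⁻¹ :=
    inv_anti₀ (by positivity) (by nlinarith [sq_nonneg a])
  have hlast : 0 ≤ a ^ 2 * (4 * (a ^ 2 + A ^ 2) ^ 2)⁻¹ := by positivity
  rw [integral_pow_three_div_sq_add_sq_pow_three ha hA.le]
  linarith

def bubbleDensity (p : ℝ × ℝ⁴) : ℝ := 27 * p.1 / ((1 + p.1) ^ 2 + ‖p.2‖ ^ 2) ^ 3

theorem bubbleDensity_nonneg {p : ℝ × ℝ⁴} (hp : 0 ≤ p.1) : 0 ≤ bubbleDensity p := by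
  unfold bubbleDensity
  positivity

theorem integrableOn_bubbleDensity_cylinder (A B : ℝ) :
    IntegrableOn bubbleDensity (Ioc 0 B ×ˢ ball 0 A) := by
  have hcont : ContinuousOn bubbleDensity (Icc 0 B ×ˢ closedBall 0 A) := by
    refine ContinuousOn.div (by fun_prop) (by fun_prop) fun p hp => ?_
    have : 0 ≤ p.1 := hp.1.1
    positivity
  exact (hcont.integrableOn_compact (isCompact_Icc.prod (isCompact_closedBall 0 A))).mono_set
    (prod_mono Ioc_subset_Icc_self ball_subset_closedBall)

theorem integral_ball_bubbleDensity (t A : ℝ) :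
    ∫ y in ball (0 : ℝ⁴) A, bubbleDensity (t, y) =
      54 * π ^ 2 * t * ∫ r in Ioo 0 A, r ^ 3 / ((1 + t) ^ 2 + r ^ 2) ^ 3 := by
  simp_rw [bubbleDensity, div_eq_mul_inv (27 * t), integral_const_mul]
  rw [integral_ball_inv_sq_add_norm_sq_pow_three]
  ring

theorem integral_ball_bubbleDensity_le {t : ℝ} (ht : 0 ≤ t) {A : ℝ} (hA : 0 ≤ A) :
    ∫ y in ball (0 : ℝ⁴) A, bubbleDensity (t, y) ≤ 27 * π ^ 2 / 2 * (t / (1 + t) ^ 2) := by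
  have h1t : 1 + t ≠ 0 := by positivity
  calc _ ≤ 54 * π ^ 2 * t * (4 * (1 + t) ^ 2)⁻¹ := by
        rw [integral_ball_bubbleDensity]
        gcongr
        exact integral_pow_three_div_sq_add_sq_pow_three_le h1t hA
    _ = _ := by field_simp; ring

theorem le_integral_ball_bubbleDensity {t : ℝ} (ht : 0 ≤ t) {A : ℝ} (hA : 0 < A) :
    27 * π ^ 2 / 2 * (t / (1 + t) ^ 2) - 27 * π ^ 2 * (t / A ^ 2) ≤
      ∫ y in ball (0 : ℝ⁴) A, bubbleDensity (t, y) := by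
  have h1t : 1 + t ≠ 0 := by positivity
  calc _ = 54 * π ^ 2 * t * ((4 * (1 + t) ^ 2)⁻¹ - (2 * A ^ 2)⁻¹) := by field_simp; ring
    _ ≤ _ := by
        rw [integral_ball_bubbleDensity]
        gcongr
        exact le_integral_pow_three_div_sq_add_sq_pow_three h1t hA

theorem integral_cylinder_eq_intervalIntegral (A : ℝ) {B : ℝ} (hB : 0 ≤ B) :
    ∫ p in Ioc 0 B ×ˢ ball 0 A, bubbleDensity p =
      ∫ t in 0..B, ∫ y in ball (0 : ℝ⁴) A, bubbleDensity (t, y) := by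
  rw [intervalIntegral.integral_of_le hB, Measure.volume_eq_prod,
    setIntegral_prod _ (integrableOn_bubbleDensity_cylinder A B)]

theorem intervalIntegrable_integral_ball_bubbleDensity (A : ℝ) {B : ℝ} (hB : 0 ≤ B) :
    IntervalIntegrable (fun t => ∫ y in ball (0 : ℝ⁴) A, bubbleDensity (t, y)) volume 0 B := by
  have h := integrableOn_bubbleDensity_cylinder A B
  rw [IntegrableOn, Measure.volume_eq_prod, ← Measure.prod_restrict] at h
  exact (intervalIntegrable_iff_integrableOn_Ioc_of_le hB).mpr h.integral_prod_left

theorem intervalIntegrable_div_one_add_sq {B : ℝ} (hB : 0 ≤ B) :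
    IntervalIntegrable (fun t : ℝ => t / (1 + t) ^ 2) volume 0 B := by
  refine ContinuousOn.intervalIntegrable_of_Icc hB
    (continuousOn_id.div (by fun_prop) fun t ht => ?_)
  have : 0 ≤ t := ht.1
  positivity

theorem integral_div_one_add_sq {B : ℝ} (hB : 0 ≤ B) :
    ∫ t in 0..B, t / (1 + t) ^ 2 = log (1 + B) + (1 + B)⁻¹ - 1 := by
  have hne : ∀ t ∈ uIcc 0 B, 1 + t ≠ 0 := fun t ht => by
    have : 0 ≤ t := by rw [uIcc_of_le hB] at ht; exact ht.1
    positivity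
  have hderiv : ∀ t ∈ uIcc 0 B,
      HasDerivAt (fun t => log (1 + t) + (1 + t)⁻¹) (t / (1 + t) ^ 2) t := by
    intro t ht
    have h1 : HasDerivAt (fun t : ℝ => 1 + t) 1 t := (hasDerivAt_id t).const_add 1
    refine ((h1.log (hne t ht)).add (h1.inv (hne t ht))).congr_deriv ?_
    field_simp [hne t ht]
    ring
  rw [intervalIntegral.integral_eq_sub_of_hasDerivAt hderiv (intervalIntegrable_div_one_add_sq hB)]
  norm_num

theorem integral_cylinder_le (A : ℝ) {B : ℝ} (hA : 0 ≤ A) (hB : 0 ≤ B) :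
    ∫ p in Ioc 0 B ×ˢ ball 0 A, bubbleDensity p ≤
      27 * π ^ 2 / 2 * (log (1 + B) + (1 + B)⁻¹ - 1) := by
  rw [integral_cylinder_eq_intervalIntegral A hB, ← integral_div_one_add_sq hB,
    ← intervalIntegral.integral_const_mul]
  refine intervalIntegral.integral_mono_on hB
    (intervalIntegrable_integral_ball_bubbleDensity A hB)
    ((intervalIntegrable_div_one_add_sq hB).const_mul _) fun t ht => ?_
  exact integral_ball_bubbleDensity_le ht.1 hA

theorem le_integral_cylinder {A : ℝ} (hA : 0 < A) {B : ℝ} (hB : 0 ≤ B) :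
    27 * π ^ 2 / 2 * (log (1 + B) + (1 + B)⁻¹ - 1 - B ^ 2 / A ^ 2) ≤
      ∫ p in Ioc 0 B ×ˢ ball 0 A, bubbleDensity p := by
  have hlin : ∫ t in 0..B, 27 * π ^ 2 * (t / A ^ 2) = 27 * π ^ 2 / 2 * (B ^ 2 / A ^ 2) := by
    simp_rw [div_eq_mul_inv _ (A ^ 2)]
    rw [intervalIntegral.integral_const_mul, intervalIntegral.integral_mul_const, integral_id]
    ring
  have hint₁ := (intervalIntegrable_div_one_add_sq hB).const_mul (27 * π ^ 2 / 2)
  have hint₂ : IntervalIntegrable (fun t => 27 * π ^ 2 * (t / A ^ 2)) volume 0 B :=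
    Continuous.intervalIntegrable (by fun_prop) 0 B
  rw [integral_cylinder_eq_intervalIntegral A hB]
  calc _ = ∫ t in 0..B, (27 * π ^ 2 / 2 * (t / (1 + t) ^ 2) - 27 * π ^ 2 * (t / A ^ 2)) := by
        rw [intervalIntegral.integral_sub hint₁ hint₂, intervalIntegral.integral_const_mul,
          integral_div_one_add_sq hB, hlin]
        ring
    _ ≤ _ := intervalIntegral.integral_mono_on hB (hint₁.sub hint₂)
        (intervalIntegrable_integral_ball_bubbleDensity A hB)
        fun t ht => le_integral_ball_bubbleDensity ht.1 hA

def halfBall (R : ℝ) : Set (ℝ × ℝ⁴) := {p | p.1 ^ 2 + ‖p.2‖ ^ 2 < R ^ 2 ∧ 0 < p.1}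

theorem measurableSet_halfBall (R : ℝ) : MeasurableSet (halfBall R) :=
  (measurableSet_lt (by fun_prop : Measurable fun p : ℝ × ℝ⁴ => p.1 ^ 2 + ‖p.2‖ ^ 2)
    measurable_const).inter (measurableSet_lt measurable_const measurable_fst)

theorem halfBall_subset_cylinder {R : ℝ} (hR : 0 ≤ R) : halfBall R ⊆ Ioc 0 R ×ˢ ball 0 R := by
  rintro ⟨t, y⟩ ⟨hsum, ht⟩
  refine ⟨⟨ht, ?_⟩, ?_⟩
  · nlinarith [sq_nonneg ‖y‖]
  · rw [mem_ball_zero_iff]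
    nlinarith [norm_nonneg y]

theorem cylinder_half_subset_halfBall (R : ℝ) : Ioc 0 (R / 2) ×ˢ ball 0 (R / 2) ⊆ halfBall R := by
  rintro ⟨t, y⟩ ⟨⟨ht, htR⟩, hy⟩
  rw [mem_ball_zero_iff] at hy
  refine ⟨?_, ht⟩
  nlinarith [norm_nonneg y]

theorem setIntegral_bubbleDensity_mono {s t : Set (ℝ × ℝ⁴)} (hst : s ⊆ t) (ht : MeasurableSet t)
    {A B : ℝ} (ht_sub : t ⊆ Ioc 0 B ×ˢ ball 0 A) :
    ∫ p in s, bubbleDensity p ≤ ∫ p in t, bubbleDensity p :=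
  setIntegral_mono_set ((integrableOn_bubbleDensity_cylinder A B).mono_set ht_sub)
    (ae_restrict_of_forall_mem ht fun _ hp => bubbleDensity_nonneg (ht_sub hp).1.1.le)
    hst.eventuallyLE

def splitLastCoord : (Fin 5 → ℝ) ≃ᵐ ℝ × ℝ⁴ :=
  (MeasurableEquiv.piFinSuccAbove (fun _ => ℝ) 4).trans
    (MeasurableEquiv.prodCongr (MeasurableEquiv.refl ℝ) (MeasurableEquiv.toLp 2 (Fin 4 → ℝ)))

theorem measurePreserving_splitLastCoord : MeasurePreserving splitLastCoord :=
  (volume_preserving_piFinSuccAbove (fun _ => ℝ) 4).trans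
    ((MeasurePreserving.id volume).prod (PiLp.volume_preserving_toLp (Fin 4)))

theorem splitLastCoord_fst (x : Fin 5 → ℝ) : (splitLastCoord x).1 = x 4 := rfl

theorem norm_splitLastCoord_snd_sq (x : Fin 5 → ℝ) :
    ‖(splitLastCoord x).2‖ ^ 2 = ∑ j : Fin 4, x ((4 : Fin 5).succAbove j) ^ 2 := by
  rw [EuclideanSpace.real_norm_sq_eq]
  rfl

theorem preimage_splitLastCoord_halfBall (R : ℝ) : splitLastCoord ⁻¹' halfBall R = hBall5 R := by
  ext x
  simp only [mem_preimage, halfBall, hBall5, mem_ofPred_eq, splitLastCoord_fst,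
    norm_splitLastCoord_snd_sq, Fin.sum_univ_succAbove _ (4 : Fin 5)]

theorem sq_rpow_div_two {b : ℝ} (hb : 0 ≤ b) (y : ℝ) : (b ^ (y / 2)) ^ 2 = b ^ y := by
  rw [← rpow_natCast, ← rpow_mul hb]
  norm_num

theorem mul_sq_Wb5 (x : Fin 5 → ℝ) : x 4 * Wb5 x ^ 2 = bubbleDensity (splitLastCoord x) := by
  have hb : 0 ≤ (1 + x 4) ^ 2 + x 0 ^ 2 + x 1 ^ 2 + x 2 ^ 2 + x 3 ^ 2 := by positivity
  have hnorm : ‖(splitLastCoord x).2‖ ^ 2 = x 0 ^ 2 + x 1 ^ 2 + x 2 ^ 2 + x 3 ^ 2 := by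
    rw [norm_splitLastCoord_snd_sq, Fin.sum_univ_four]
    rfl
  rw [bubbleDensity, splitLastCoord_fst, hnorm, Wb5, mul_pow, sq_rpow_div_two (by norm_num),
    sq_rpow_div_two hb, rpow_neg hb, rpow_ofNat, rpow_ofNat]
  ring

theorem integral_hBall5_eq_integral_halfBall (R : ℝ) :
    ∫ x in hBall5 R, x 4 * Wb5 x ^ 2 = ∫ p in halfBall R, bubbleDensity p := by
  simp_rw [mul_sq_Wb5, ← preimage_splitLastCoord_halfBall]
  exact measurePreserving_splitLastCoord.setIntegral_preimage_emb
    splitLastCoord.measurableEmbedding _ _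

theorem tendsto_log_one_add_div_sub_log {c : ℝ} (hc : 0 < c) :
    Tendsto (fun R => log (1 + R / c) - log R) atTop (𝓝 (log c⁻¹)) := by
  have h : Tendsto (fun R : ℝ => log (R⁻¹ + c⁻¹)) atTop (𝓝 (log c⁻¹)) := by
    have := (tendsto_inv_atTop_zero.add_const c⁻¹).log (by rw [zero_add]; positivity)
    rwa [zero_add] at this
  refine h.congr' ?_
  filter_upwards [eventually_gt_atTop 0] with R hR
  rw [← log_div (by positivity) hR.ne']
  congr 1
  field_simp

theorem tendsto_inv_log_mul_of_tendsto_sub_log {g : ℝ → ℝ} {L : ℝ}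
    (h : Tendsto (fun R => g R - log R) atTop (𝓝 L)) :
    Tendsto (fun R => (log R)⁻¹ * g R) atTop (𝓝 1) := by
  have h' := (tendsto_log_atTop.inv_tendsto_atTop.mul h).add_const 1
  rw [zero_mul, zero_add] at h'
  refine h'.congr' ?_
  filter_upwards [eventually_gt_atTop 1] with R hR
  simp only [Pi.inv_apply]
  field_simp [(log_pos hR).ne']
  ring

theorem tendsto_inv_log_mul_log_one_add_div {c : ℝ} (hc : 0 < c) (d : ℝ) :
    Tendsto (fun R => (log R)⁻¹ * (log (1 + R / c) + (1 + R / c)⁻¹ - d)) atTop (𝓝 1) := by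
  refine tendsto_inv_log_mul_of_tendsto_sub_log (L := log c⁻¹ + 0 - d) ?_
  have hinv : Tendsto (fun R => (1 + R / c)⁻¹) atTop (𝓝 0) :=
    tendsto_inv_atTop_zero.comp (tendsto_atTop_add_const_left _ 1 (tendsto_id.atTop_div_const hc))
  refine (((tendsto_log_one_add_div_sub_log hc).add hinv).sub_const d).congr fun R => ?_
  ring

theorem le_integral_hBall5 {R : ℝ} (hR : 0 < R) :
    27 * π ^ 2 / 2 * (log (1 + R / 2) + (1 + R / 2)⁻¹ - 2) ≤ ∫ x in hBall5 R, x 4 * Wb5 x ^ 2 := by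
  rw [integral_hBall5_eq_integral_halfBall]
  calc _ = 27 * π ^ 2 / 2 * (log (1 + R / 2) + (1 + R / 2)⁻¹ - 1 - (R / 2) ^ 2 / (R / 2) ^ 2) := by
        rw [div_self (by positivity)]
        ring
    _ ≤ _ := le_integral_cylinder (by positivity) (by positivity)
    _ ≤ _ := setIntegral_bubbleDensity_mono (cylinder_half_subset_halfBall R)
        (measurableSet_halfBall R) (halfBall_subset_cylinder hR.le)

theorem integral_hBall5_le {R : ℝ} (hR : 0 ≤ R) :
    ∫ x in hBall5 R, x 4 * Wb5 x ^ 2 ≤ 27 * π ^ 2 / 2 * (log (1 + R) + (1 + R)⁻¹ - 1) := by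
  rw [integral_hBall5_eq_integral_halfBall]
  calc _ ≤ _ := setIntegral_bubbleDensity_mono (halfBall_subset_cylinder hR)
        (measurableSet_Ioc.prod measurableSet_ball) subset_rfl
    _ ≤ _ := integral_cylinder_le R hR hR

/-- `lim_{R→∞} (log R)⁻¹ ∫_{B⁵₊(0,R)} x₅ W² dx = 27π²/2`: the weighted `L²` mass of the
bubble diverges logarithmically with rate `27π²/2`. -/
theorem statement19 :
    Tendsto (fun R : ℝ => (Real.log R)⁻¹ * ∫ x in hBall5 R, x 4 * (Wb5 x) ^ 2)
      atTop (nhds (27 * Real.pi ^ 2 / 2)) := by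
  have hlim : ∀ c > 0, ∀ d, Tendsto (fun R => (log R)⁻¹ *
      (27 * π ^ 2 / 2 * (log (1 + R / c) + (1 + R / c)⁻¹ - d))) atTop (𝓝 (27 * π ^ 2 / 2)) :=
    fun c hc d => by
      simpa [mul_left_comm] using
        (tendsto_inv_log_mul_log_one_add_div hc d).const_mul (27 * π ^ 2 / 2)
  have hupper := hlim 1 one_pos 1
  simp only [div_one] at hupper
  refine tendsto_of_tendsto_of_tendsto_of_le_of_le' (hlim 2 two_pos 2) hupper ?_ ?_ <;>
    filter_upwards [eventually_gt_atTop 1] with R hR <;>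
    refine mul_le_mul_of_nonneg_left ?_ (inv_nonneg.mpr (log_nonneg hR.le))
  exacts [le_integral_hBall5 (by linarith), integral_hBall5_le (by linarith)]
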